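/- Let a ≠ 0, b ≠ 0 and let {f,g} be the Poisson bracket on formal power series R[[x1,x2,x3]] given by the bivector Λ = b(x1²+x2²)∂1∧∂2 + x3(2bx1−ax2)∂2∧∂3 + x3(ax1+2bx2)∂3∧∂1. Then the only Casimir functions (formal power series f with {f,g} = 0 for all g) are the constants. -/

import Mathlib

noncomputable section

abbrev F3 := MvPowerSeries (Fin 3) ℝ

/-- The partial derivative `∂i` of a formal power series in `x1, x2, x3`. -/
def pd (i : Fin 3) (f : F3) : F3 :=
  fun s => ((s i : ℝ) + 1) * MvPowerSeries.coeff (R := ℝ) (s + Finsupp.single i 1) f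

open MvPowerSeries in
/-- The Poisson bracket on `ℝ[[x1,x2,x3]]` given by the bivector
`Λ = b(x1²+x2²)∂1∧∂2 + x3(2bx1−ax2)∂2∧∂3 + x3(ax1+2bx2)∂3∧∂1`. -/
def br (a b : ℝ) (f g : F3) : F3 :=
  C (σ := Fin 3) (R := ℝ) b * (X 0 ^ 2 + X 1 ^ 2) * (pd 0 f * pd 1 g - pd 1 f * pd 0 g)
  + X 2 * (C (σ := Fin 3) (R := ℝ) (2*b) * X 0 - C (σ := Fin 3) (R := ℝ) a * X 1)
      * (pd 1 f * pd 2 g - pd 2 f * pd 1 g)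
  + X 2 * (C (σ := Fin 3) (R := ℝ) a * X 0 + C (σ := Fin 3) (R := ℝ) (2*b) * X 1)
      * (pd 2 f * pd 0 g - pd 0 f * pd 2 g)

/-!
Bracketing a Casimir `f` with the coordinates gives `b Y₂ f = a Y₃ f` and `a Y₁ f = 2b Y₂ f`,
where `Y₁ = x₁∂₁ + x₂∂₂`, `Y₂ = x₁∂₂ − x₂∂₁`, `Y₃ = x₃∂₃`. On the part of `f` of `x₃`-degree `p`,
`Y₃` acts as `p`, while `Y₂` is skew-adjoint for the positive definite pairing
`⟨x^α, x^β⟩ = δ_{αβ} α₁! α₂!`; hence, as `a ≠ 0`, that part vanishes for `p ≥ 1`. Then `Y₃ f = 0`,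
so `b Y₂ f = 0` and `Y₁ f = 0`, which leaves only the constant term.
-/

open MvPowerSeries Finsupp
open scoped Nat

namespace MvPowerSeries

variable {σ R : Type*} [CommSemiring R]

theorem coeff_single_add_X_mul (i : σ) (s : σ →₀ ℕ) (g : MvPowerSeries σ R) :
    coeff (single i 1 + s) (X i * g) = coeff s g := by
  rw [X_def, coeff_add_monomial_mul, one_mul]

theorem coeff_X_mul_of_apply_eq_zero {i : σ} {s : σ →₀ ℕ} (hs : s i = 0)
    (g : MvPowerSeries σ R) : coeff s (X i * g) = 0 := by
  rw [X_def, coeff_monomial_mul, if_neg (by rw [single_le_iff]; omega)]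

theorem X_ne_zero [Nontrivial R] (i : σ) : (X i : MvPowerSeries σ R) ≠ 0 := fun h ↦ by
  simpa using congrArg (coeff (single i 1)) h

end MvPowerSeries

namespace QuadraticPoisson

theorem coeff_pd (i : Fin 3) (f : F3) (s : Fin 3 →₀ ℕ) :
    coeff s (pd i f) = ((s i : ℝ) + 1) * coeff (s + single i 1) f := rfl

theorem pd_X_self (i : Fin 3) : pd i (X i) = 1 := by
  classical
  ext s
  rw [coeff_pd, coeff_X, coeff_one]
  by_cases hs : s = 0
  · simp [hs]
  · simp [hs, add_eq_right]

theorem pd_X_of_ne {i j : Fin 3} (h : i ≠ j) : pd i (X j) = 0 := by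
  classical
  ext s
  rw [coeff_pd, coeff_X, if_neg, mul_zero, map_zero]
  intro hs
  simpa [single_apply, h] using DFunLike.congr_fun hs i

/-- `x_i ∂_i`; the paper's `Y₁` is `euler 0 + euler 1` and its `Y₃` is `euler 2`. -/
def euler (i : Fin 3) (f : F3) : F3 := X i * pd i f

/-- The paper's `Y₂ = x₁∂₂ − x₂∂₁`. -/
def rotation (f : F3) : F3 := X 0 * pd 1 f - X 1 * pd 0 f

theorem coeff_euler (i : Fin 3) (f : F3) (s : Fin 3 →₀ ℕ) :
    coeff s (euler i f) = s i * coeff s f := by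
  by_cases hs : s i = 0
  · rw [euler, coeff_X_mul_of_apply_eq_zero hs, hs, Nat.cast_zero, zero_mul]
  · obtain ⟨t, rfl⟩ : ∃ t, s = single i 1 + t :=
      ⟨s - single i 1, by rw [add_tsub_cancel_of_le (single_le_iff.mpr (by omega))]⟩
    rw [euler, coeff_single_add_X_mul, coeff_pd, add_comm t]
    simp only [Finsupp.add_apply, single_eq_same]
    push_cast
    ring

theorem X_zero_mul_br_X_zero_add_X_one_mul_br_X_one (a b : ℝ) (f : F3) :
    X 0 * br a b f (X 0) + X 1 * br a b f (X 1) =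
      (X 0 ^ 2 + X 1 ^ 2) * (C a * euler 2 f - C b * rotation f) := by
  simp only [br, euler, rotation, pd_X_self, pd_X_of_ne, ne_eq, Fin.reduceEq, not_false_eq_true]
  ring

theorem br_X_two (a b : ℝ) (f : F3) :
    br a b f (X 2) = X 2 * (C (2 * b) * rotation f - C a * (euler 0 f + euler 1 f)) := by
  simp only [br, euler, rotation, pd_X_self, pd_X_of_ne, ne_eq, Fin.reduceEq, not_false_eq_true]
  ring

def mono (k l p : ℕ) : Fin 3 →₀ ℕ := single 0 k + single 1 l + single 2 p

@[simp] theorem mono_apply_zero (k l p : ℕ) : mono k l p 0 = k := by simp [mono]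
@[simp] theorem mono_apply_one (k l p : ℕ) : mono k l p 1 = l := by simp [mono]
@[simp] theorem mono_apply_two (k l p : ℕ) : mono k l p 2 = p := by simp [mono]

theorem eq_mono (s : Fin 3 →₀ ℕ) : s = mono (s 0) (s 1) (s 2) := by
  ext i
  fin_cases i <;> simp

theorem coeff_mono_succ_X_zero_mul_pd_one (k l p : ℕ) (f : F3) :
    coeff (mono (k + 1) l p) (X 0 * pd 1 f) = (l + 1) * coeff (mono k (l + 1) p) f := by
  have hs : mono (k + 1) l p = single 0 1 + mono k l p := by ext i; fin_cases i <;> simp; omega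
  have ht : mono k l p + single 1 1 = mono k (l + 1) p := by ext i; fin_cases i <;> simp
  rw [hs, coeff_single_add_X_mul, coeff_pd, ht, mono_apply_one]

theorem coeff_mono_succ_X_one_mul_pd_zero (k l p : ℕ) (f : F3) :
    coeff (mono k (l + 1) p) (X 1 * pd 0 f) = (k + 1) * coeff (mono (k + 1) l p) f := by
  have hs : mono k (l + 1) p = single 1 1 + mono k l p := by ext i; fin_cases i <;> simp; omega
  have ht : mono k l p + single 0 1 = mono (k + 1) l p := by ext i; fin_cases i <;> simp
  rw [hs, coeff_single_add_X_mul, coeff_pd, ht, mono_apply_zero]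

open Finset in
/-- `⟨f, Y₂ f⟩ = 0` for the pairing `⟨x^α, x^β⟩ = δ_{αβ} α₁! α₂!` restricted to the monomials
`x₁^k x₂^l x₃^p` with `k + l = n`. -/
theorem sum_factorial_mul_coeff_mul_coeff_rotation (f : F3) (n p : ℕ) :
    ∑ q ∈ antidiagonal n, (q.1 ! * q.2 ! : ℝ) * coeff (mono q.1 q.2 p) f *
      coeff (mono q.1 q.2 p) (rotation f) = 0 := by
  simp only [rotation, map_sub, mul_sub, sum_sub_distrib, sub_eq_zero]
  cases n with
  | zero =>
    simp [coeff_X_mul_of_apply_eq_zero]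
  | succ m =>
    rw [Finset.Nat.sum_antidiagonal_succ, Finset.Nat.sum_antidiagonal_succ',
      coeff_X_mul_of_apply_eq_zero (mono_apply_zero ..),
      coeff_X_mul_of_apply_eq_zero (mono_apply_one ..)]
    simp only [coeff_mono_succ_X_zero_mul_pd_one, coeff_mono_succ_X_one_mul_pd_zero, mul_zero,
      zero_add]
    refine Finset.sum_congr rfl fun q _ => ?_
    simp only [Nat.factorial_succ]
    push_cast
    ring

open Finset in
theorem euler_two_eq_zero_of_C_mul_rotation_eq {a b : ℝ} (ha : a ≠ 0) {f : F3}
    (h : C b * rotation f = C a * euler 2 f) : euler 2 f = 0 := by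
  ext s
  rw [coeff_euler, map_zero]
  rcases eq_or_ne (s 2) 0 with hs | hs
  · rw [hs, Nat.cast_zero, zero_mul]
  · have hsq : a * s 2 * ∑ q ∈ antidiagonal (s 0 + s 1),
        (q.1 ! * q.2 ! : ℝ) * coeff (mono q.1 q.2 (s 2)) f ^ 2 = 0 := by
      calc _ = ∑ q ∈ antidiagonal (s 0 + s 1), (q.1 ! * q.2 ! : ℝ) * coeff (mono q.1 q.2 (s 2)) f *
              coeff (mono q.1 q.2 (s 2)) (C a * euler 2 f) := by
            rw [Finset.mul_sum]
            refine sum_congr rfl fun q _ => ?_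
            rw [coeff_C_mul, coeff_euler, mono_apply_two]
            ring
        _ = b * ∑ q ∈ antidiagonal (s 0 + s 1), (q.1 ! * q.2 ! : ℝ) *
              coeff (mono q.1 q.2 (s 2)) f * coeff (mono q.1 q.2 (s 2)) (rotation f) := by
            rw [← h, Finset.mul_sum]
            refine sum_congr rfl fun q _ => ?_
            rw [coeff_C_mul]
            ring
        _ = 0 := by rw [sum_factorial_mul_coeff_mul_coeff_rotation, mul_zero]
    have hsum := (mul_eq_zero.mp hsq).resolve_left (mul_ne_zero ha (Nat.cast_ne_zero.mpr hs))
    have hterm := (sum_eq_zero_iff_of_nonneg fun q _ => by positivity).mp hsum (s 0, s 1)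
      (mem_antidiagonal.mpr rfl)
    rw [← eq_mono] at hterm
    have hcoeff : coeff s f = 0 := by simpa [Nat.factorial_ne_zero] using hterm
    rw [hcoeff, mul_zero]

theorem eq_C_constantCoeff_of_euler_sum_eq_zero {f : F3}
    (h : euler 0 f + euler 1 f + euler 2 f = 0) : f = C (constantCoeff f) := by
  classical
  ext s
  have hs := congrArg (coeff s) h
  rw [map_add, map_add, coeff_euler, coeff_euler, coeff_euler, map_zero (coeff s), ← add_mul,
    ← add_mul] at hs
  rw [coeff_C]
  split_ifs with hs0
  · rw [hs0, coeff_zero_eq_constantCoeff_apply]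
  · obtain ⟨i, hi⟩ := Finsupp.ne_iff.mp hs0
    have hdeg : s 0 + s 1 + s 2 ≠ 0 := by fin_cases i <;> simp_all
    exact (mul_eq_zero.mp hs).resolve_left (by exact_mod_cast hdeg)

theorem X_zero_sq_add_X_one_sq_ne_zero : (X 0 ^ 2 + X 1 ^ 2 : F3) ≠ 0 := by
  classical
  intro h
  have h02 := congrArg (coeff (single 0 2)) h
  simp [coeff_X_pow, single_left_inj] at h02

end QuadraticPoisson

open QuadraticPoisson in
theorem casimirs_are_constants_general (a b : ℝ) (ha : a ≠ 0) (f : F3)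
    (hf : ∀ g : F3, br a b f g = 0) :
    ∃ c : ℝ, f = MvPowerSeries.C (σ := Fin 3) (R := ℝ) c := by
  have hrot : C b * rotation f = C a * euler 2 f := by
    have h := X_zero_mul_br_X_zero_add_X_one_mul_br_X_one a b f
    rw [hf, hf, mul_zero, mul_zero, add_zero, eq_comm, mul_eq_zero, sub_eq_zero] at h
    exact (h.resolve_left X_zero_sq_add_X_one_sq_ne_zero).symm
  have h2 : euler 2 f = 0 := euler_two_eq_zero_of_C_mul_rotation_eq ha hrot
  have h01 : euler 0 f + euler 1 f = 0 := by
    have h := br_X_two a b f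
    rw [hf, map_mul, mul_assoc, hrot, h2, mul_zero, mul_zero, zero_sub, mul_neg, eq_comm,
      neg_eq_zero, mul_eq_zero, mul_eq_zero] at h
    exact (h.resolve_left (X_ne_zero 2)).resolve_left ((map_ne_zero_iff _ C_injective).mpr ha)
  exact ⟨_, eq_C_constantCoeff_of_euler_sum_eq_zero (by rw [h01, h2, add_zero])⟩

/-- For `a ≠ 0`, `b ≠ 0`, the only Casimir functions of the quadratic Poisson structure
`Λ` on formal power series, i.e. the `f ∈ ℝ[[x1,x2,x3]]` with `{f,g} = 0` for all `g`,
are the constants. -/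
theorem casimirs_are_constants (a b : ℝ) (ha : a ≠ 0) (hb : b ≠ 0) (f : F3)
    (hf : ∀ g : F3, br a b f g = 0) :
    ∃ c : ℝ, f = MvPowerSeries.C (σ := Fin 3) (R := ℝ) c :=
  casimirs_are_constants_general a b ha f hf
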